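/- Let μ be a positive finite Borel measure on ℝ^d, 0 < β ≤ d, and suppose there exists φ ∈ L²(μ) with ‖φ‖_{L²(μ)} > 0 such that the complex measure ν = φμ satisfies |ν̂(t)| ≤ C₁ |t|^{−β/2} for all t ∈ ℝ^d. Suppose E(Λ) is a frame in L²(μ) and #(Λ ∩ B(0,r)) ≤ C r^α for all r ≥ 1. Then α ≥ (1/β + 1/d)^{−1}. -/

import Mathlib

open MeasureTheory Complex

noncomputable def fexp {d : ℕ} (l x : EuclideanSpace ℝ (Fin d)) : ℂ :=
  Complex.exp (((2 * Real.pi * (inner ℝ l x : ℝ) : ℝ) : ℂ) * Complex.I)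

noncomputable def fourierM {d : ℕ} (μ : Measure (EuclideanSpace ℝ (Fin d)))
    (t : EuclideanSpace ℝ (Fin d)) : ℂ :=
  ∫ x, Complex.exp ((((-2) * Real.pi * (inner ℝ t x : ℝ) : ℝ) : ℂ) * Complex.I) ∂μ

/-- the system `e i` is a frame in `L²(μ)` with lower bound `A` and upper bound `B`. -/
def IsFrameWith {α : Type*} [MeasurableSpace α] (μ : Measure α)
    {ι : Type*} (e : ι → α → ℂ) (A B : ℝ) : Prop :=
  ∀ f : α → ℂ, MeasureTheory.MemLp f 2 μ →
    A * ∫ x, ‖f x‖ ^ 2 ∂μ ≤ (∑' i, ‖∫ x, f x * (starRingEnd ℂ) (e i x) ∂μ‖ ^ 2) ∧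
    (∑' i, ‖∫ x, f x * (starRingEnd ℂ) (e i x) ∂μ‖ ^ 2) ≤ B * ∫ x, ‖f x‖ ^ 2 ∂μ

/-- `μ` admits a Fourier frame: a countable set `Λ ⊆ ℝ^d` of frequencies such that
the exponential system `E(Λ)` is a frame in `L²(μ)`. -/
def HasFourierFrame {d : ℕ} (μ : Measure (EuclideanSpace ℝ (Fin d))) : Prop :=
  ∃ Λ : Set (EuclideanSpace ℝ (Fin d)), Λ.Countable ∧
    ∃ A B : ℝ, 0 < A ∧ A ≤ B ∧ IsFrameWith μ (fun l : Λ => fexp (l : EuclideanSpace ℝ (Fin d))) A B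


/-!
If `α < βd/(β+d)`, put `R = Tᵈ` and `ρ = c T^(d-α)` with `c` small. The counting bound leaves
fewer than `(R/ρ)ᵈ` points of `Λ` in `B(0, 2R)`, so by volume some `y ∈ B(0, R)` lies at distance
at least `ρ` from `Λ`. The frame coefficients of the modulated function `e_y φ` are the values
`ν̂(λ - y)`, so the lower frame bound and the decay of `ν̂`, summed over dyadic shells around `y`,
give `A ‖φ‖² ≲ R^α ρ^(-β) ≍ T^(α(β+d) - βd)`, which tends to `0` as `T → ∞`.
-/

open Metric Filter Module

def CountingBound {E : Type*} [SeminormedAddCommGroup E] (Λ : Set E) (K a : ℝ) : Prop :=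
  ∀ r : ℝ, 1 ≤ r →
    (Λ ∩ ball (0 : E) r).Finite ∧ ((Λ ∩ ball (0 : E) r).ncard : ℝ) ≤ K * r ^ a

section Counting

variable {E : Type*} [SeminormedAddCommGroup E] {Λ : Set E} {K a : ℝ}

theorem CountingBound.mono {K' a' : ℝ} (h : CountingBound Λ K a) (hK : K ≤ K') (hK' : 0 ≤ K')
    (ha : a ≤ a') : CountingBound Λ K' a' := fun r hr ↦
  ⟨(h r hr).1, (h r hr).2.trans <| mul_le_mul hK (Real.rpow_le_rpow_of_exponent_le hr ha)
    (by positivity) hK'⟩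

theorem CountingBound.card_le (h : CountingBound Λ K a) {r : ℝ} (hr : 1 ≤ r) (s : Finset Λ)
    (hs : ∀ l ∈ s, ‖(l : E)‖ < r) : (s.card : ℝ) ≤ K * r ^ a := by
  obtain ⟨hfin, hcard⟩ := h r hr
  have hsub : (s.map (Function.Embedding.subtype _) : Set E) ⊆ Λ ∩ ball 0 r := by
    rintro _ hx
    obtain ⟨l, hl, rfl⟩ := Finset.mem_map.1 hx
    exact ⟨l.2, mem_ball_zero_iff.2 (hs l hl)⟩
  calc (s.card : ℝ) = (s.map (Function.Embedding.subtype _)).card := by rw [Finset.card_map]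
    _ ≤ (Λ ∩ ball 0 r).ncard := by
      rw [← Set.ncard_coe_finset]; exact_mod_cast Set.ncard_le_ncard hsub hfin
    _ ≤ K * r ^ a := hcard

theorem pow_mul_rpow {x z : ℝ} (hx : 0 ≤ x) (hz : 0 ≤ z) (k : ℕ) (b : ℝ) :
    (x ^ k * z) ^ b = (x ^ b) ^ k * z ^ b := by
  rw [Real.mul_rpow (by positivity) hz, ← Real.rpow_natCast, ← Real.rpow_mul hx,
    ← Real.rpow_natCast, ← Real.rpow_mul hx, mul_comm (k : ℝ) b]

/-- The points of `Λ` with `2ᵏρ ≤ dist l y < 2ᵏ⁺¹ρ` lie in `ball 0 (2ᵏ⁺²R)`. -/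
theorem CountingBound.sum_shell_le (h : CountingBound Λ K a) {β : ℝ} (hβ : 0 ≤ β)
    {y : E} {R ρ : ℝ} (hR : 1 ≤ R) (hρ : 0 < ρ) (hρR : ρ ≤ R) (hy : ‖y‖ < R) (k : ℕ)
    (s : Finset Λ)
    (hs : ∀ l ∈ s, 2 ^ k * ρ ≤ dist (l : E) y ∧ dist (l : E) y < 2 ^ (k + 1) * ρ) :
    ∑ l ∈ s, dist (l : E) y ^ (-β) ≤ K * 4 ^ a * (R ^ a * ρ ^ (-β)) * (2 ^ (a - β)) ^ k := by
  have h2k : (1 : ℝ) ≤ 2 ^ k := one_le_pow₀ one_le_two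
  have hcard : (s.card : ℝ) ≤ K * (2 ^ k * (4 * R)) ^ a := by
    refine h.card_le (by nlinarith) _ fun l hl ↦ ?_
    calc ‖(l : E)‖ ≤ dist (l : E) y + ‖y‖ := by
          rw [dist_eq_norm]; exact norm_le_norm_sub_add _ _
      _ < 2 ^ (k + 1) * ρ + R := add_lt_add (hs l hl).2 hy
      _ ≤ 2 ^ k * (4 * R) := by rw [pow_succ]; nlinarith
  calc ∑ l ∈ s, dist (l : E) y ^ (-β)
      ≤ s.card * (2 ^ k * ρ) ^ (-β) := by
        simpa using Finset.sum_le_card_nsmul s _ _ fun l hl ↦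
          Real.rpow_le_rpow_of_nonpos (by positivity) (hs l hl).1 (neg_nonpos.2 hβ)
    _ ≤ K * (2 ^ k * (4 * R)) ^ a * (2 ^ k * ρ) ^ (-β) :=
        mul_le_mul_of_nonneg_right hcard (by positivity)
    _ = K * 4 ^ a * (R ^ a * ρ ^ (-β)) * (2 ^ (a - β)) ^ k := by
        rw [pow_mul_rpow zero_le_two (by positivity), pow_mul_rpow zero_le_two hρ.le,
          Real.mul_rpow (by norm_num) (by positivity), sub_eq_add_neg, Real.rpow_add two_pos,
          mul_pow]
        ring

theorem CountingBound.sum_rpow_neg_dist_le (h : CountingBound Λ K a) (hK : 0 ≤ K) {β : ℝ}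
    (hβ : 0 ≤ β) (haβ : a < β) {y : E} {R ρ : ℝ} (hR : 1 ≤ R) (hρ : 0 < ρ) (hρR : ρ ≤ R)
    (hy : ‖y‖ < R) (hsep : ∀ l ∈ Λ, ρ ≤ dist l y) (s : Finset Λ) :
    ∑ l ∈ s, dist (l : E) y ^ (-β) ≤
      K * 4 ^ a * (1 - 2 ^ (a - β))⁻¹ * (R ^ a * ρ ^ (-β)) := by
  classical
  have hq0 : (0 : ℝ) ≤ 2 ^ (a - β) := by positivity
  have hq1 : (2 : ℝ) ^ (a - β) < 1 := Real.rpow_lt_one_of_one_lt_of_neg one_lt_two (by linarith)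
  have hshell (l : Λ) :
      ∃ k : ℕ, 2 ^ k * ρ ≤ dist (l : E) y ∧ dist (l : E) y < 2 ^ (k + 1) * ρ := by
    obtain ⟨k, hk⟩ := exists_nat_pow_near ((one_le_div hρ).2 (hsep l l.2)) one_lt_two
    exact ⟨k, (le_div_iff₀ hρ).1 hk.1, (div_lt_iff₀ hρ).1 hk.2⟩
  choose κ hκ using hshell
  set c : ℝ := K * 4 ^ a * (R ^ a * ρ ^ (-β))
  calc ∑ l ∈ s, dist (l : E) y ^ (-β)
      = ∑ k ∈ Finset.range (s.sup κ + 1), ∑ l ∈ s with κ l = k, dist (l : E) y ^ (-β) :=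
        (Finset.sum_fiberwise_of_maps_to
          (fun l hl ↦ Finset.mem_range.2 (Nat.lt_succ_of_le (Finset.le_sup hl))) _).symm
    _ ≤ ∑ k ∈ Finset.range (s.sup κ + 1), c * (2 ^ (a - β)) ^ k :=
        Finset.sum_le_sum fun k _ ↦ h.sum_shell_le hβ hR hρ hρR hy k _ fun l hl ↦ by
          rw [← (Finset.mem_filter.1 hl).2]; exact hκ l
    _ ≤ c * (1 - 2 ^ (a - β))⁻¹ := by
        rw [← Finset.mul_sum, ← tsum_geometric_of_lt_one hq0 hq1]
        exact mul_le_mul_of_nonneg_left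
          ((summable_geometric_of_lt_one hq0 hq1).sum_le_tsum _ fun k _ ↦ by positivity)
          (by positivity)
    _ = K * 4 ^ a * (1 - 2 ^ (a - β))⁻¹ * (R ^ a * ρ ^ (-β)) := by ring

end Counting

section Pigeonhole

variable {E : Type*} [NormedAddCommGroup E] [NormedSpace ℝ E] [MeasurableSpace E] [BorelSpace E]
  [FiniteDimensional ℝ E] [Nontrivial E]

theorem exists_mem_ball_forall_le_dist (S : Finset E) (x : E) {R ρ : ℝ} (hR : 0 < R)
    (hρ : 0 ≤ ρ) (h : S.card * ρ ^ finrank ℝ E < R ^ finrank ℝ E) :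
    ∃ y ∈ ball x R, ∀ l ∈ S, ρ ≤ dist l y := by
  by_contra! hcover
  set μ : Measure E := Measure.addHaar
  have hv₀ : μ (ball 0 1) ≠ 0 := (measure_ball_pos μ _ one_pos).ne'
  have hv : μ (ball 0 1) ≠ ⊤ := measure_ball_lt_top.ne
  have hsub : ball x R ⊆ ⋃ l ∈ S, ball l ρ := fun y hy ↦ by
    obtain ⟨l, hl, hly⟩ := hcover y hy
    exact Set.mem_biUnion hl (mem_ball'.2 hly)
  have := calc
    ENNReal.ofReal (R ^ finrank ℝ E) * μ (ball 0 1) = μ (ball x R) :=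
        (μ.addHaar_ball x hR.le).symm
    _ ≤ ∑ l ∈ S, μ (ball l ρ) := (measure_mono hsub).trans (measure_biUnion_finset_le _ _)
    _ = ENNReal.ofReal (S.card * ρ ^ finrank ℝ E) * μ (ball 0 1) := by
        simp_rw [μ.addHaar_ball _ hρ, Finset.sum_const, nsmul_eq_mul,
          ENNReal.ofReal_mul (Nat.cast_nonneg _), ENNReal.ofReal_natCast, mul_assoc]
  rw [ENNReal.mul_le_mul_iff_left hv₀ hv, ENNReal.ofReal_le_ofReal_iff (by positivity)] at this
  exact this.not_gt h

theorem CountingBound.exists_forall_le_dist {Λ : Set E} {K a : ℝ} (h : CountingBound Λ K a)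
    {R ρ : ℝ} (hR : 1 ≤ R) (hρ : 0 ≤ ρ) (hρR : ρ ≤ R)
    (hsmall : K * (2 * R) ^ a * ρ ^ finrank ℝ E < R ^ finrank ℝ E) :
    ∃ y : E, ‖y‖ < R ∧ ∀ l ∈ Λ, ρ ≤ dist l y := by
  obtain ⟨hfin, hcard⟩ := h (2 * R) (by linarith)
  have hcard' : (hfin.toFinset.card : ℝ) ≤ K * (2 * R) ^ a := by
    rwa [← Set.ncard_eq_toFinset_card _ hfin]
  obtain ⟨y, hy, hfar⟩ := exists_mem_ball_forall_le_dist hfin.toFinset 0 (by linarith) hρ <|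
    (mul_le_mul_of_nonneg_right hcard' (by positivity)).trans_lt hsmall
  rw [mem_ball_zero_iff] at hy
  refine ⟨y, hy, fun l hl ↦ ?_⟩
  by_cases hlR : ‖l‖ < 2 * R
  · exact hfar l (hfin.mem_toFinset.2 ⟨hl, mem_ball_zero_iff.2 hlR⟩)
  · calc ρ ≤ ‖l‖ - ‖y‖ := by linarith
      _ ≤ dist l y := by rw [dist_eq_norm]; exact norm_sub_norm_le l y

end Pigeonhole

section Fourier

variable {d : ℕ}

/-- `ν̂(t)` for the complex measure `ν = φ μ`. -/
noncomputable def weightedFourier (μ : Measure (EuclideanSpace ℝ (Fin d)))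
    (φ : EuclideanSpace ℝ (Fin d) → ℂ) (t : EuclideanSpace ℝ (Fin d)) : ℂ :=
  ∫ x, Complex.exp ((((-2) * Real.pi * (inner ℝ t x : ℝ) : ℝ) : ℂ) * Complex.I) * φ x ∂μ

theorem norm_fexp (l x : EuclideanSpace ℝ (Fin d)) : ‖fexp l x‖ = 1 :=
  Complex.norm_exp_ofReal_mul_I _

theorem continuous_fexp (l : EuclideanSpace ℝ (Fin d)) : Continuous (fexp l) := by
  unfold fexp; fun_prop

theorem fexp_mul_mul_conj_fexp (y l x : EuclideanSpace ℝ (Fin d)) (z : ℂ) :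
    fexp y x * z * starRingEnd ℂ (fexp l x) =
      Complex.exp ((((-2) * Real.pi * (inner ℝ (l - y) x : ℝ) : ℝ) : ℂ) * Complex.I) * z := by
  rw [fexp, fexp, ← Complex.exp_conj, map_mul, Complex.conj_I, Complex.conj_ofReal,
    mul_right_comm, ← Complex.exp_add, inner_sub_left]
  push_cast
  ring_nf

variable {μ : Measure (EuclideanSpace ℝ (Fin d))} {φ : EuclideanSpace ℝ (Fin d) → ℂ}
  {Λ : Set (EuclideanSpace ℝ (Fin d))} {A B β C₁ K a : ℝ}

theorem IsFrameWith.mul_le_tsum_weightedFourier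
    (hframe : IsFrameWith μ (fun l : Λ => fexp (l : EuclideanSpace ℝ (Fin d))) A B)
    (hφ : MemLp φ 2 μ) (y : EuclideanSpace ℝ (Fin d)) :
    A * ∫ x, ‖φ x‖ ^ 2 ∂μ ≤ ∑' l : Λ, ‖weightedFourier μ φ (l - y)‖ ^ 2 := by
  have hmod : MemLp (fun x ↦ fexp y x * φ x) 2 μ :=
    hφ.of_le ((continuous_fexp y).aestronglyMeasurable.mul hφ.aestronglyMeasurable)
      (.of_forall fun x ↦ by rw [norm_mul, norm_fexp, one_mul])
  simpa only [norm_mul, norm_fexp, one_mul, fexp_mul_mul_conj_fexp, weightedFourier]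
    using (hframe _ hmod).1

theorem IsFrameWith.le_of_forall_le_dist
    (hframe : IsFrameWith μ (fun l : Λ => fexp (l : EuclideanSpace ℝ (Fin d))) A B)
    (hφ : MemLp φ 2 μ)
    (hdecay : ∀ t, t ≠ 0 → ‖weightedFourier μ φ t‖ ≤ C₁ * ‖t‖ ^ (-(β / 2)))
    (hΛ : CountingBound Λ K a) (hK : 0 ≤ K) (hβ : 0 ≤ β) (haβ : a < β)
    {y : EuclideanSpace ℝ (Fin d)} {R ρ : ℝ} (hR : 1 ≤ R) (hρ : 0 < ρ) (hρR : ρ ≤ R) (hy : ‖y‖ < R)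
    (hsep : ∀ l ∈ Λ, ρ ≤ dist l y) :
    A * ∫ x, ‖φ x‖ ^ 2 ∂μ ≤
      C₁ ^ 2 * (K * 4 ^ a * (1 - 2 ^ (a - β))⁻¹ * (R ^ a * ρ ^ (-β))) := by
  have hterm (l : Λ) : ‖weightedFourier μ φ (l - y)‖ ^ 2 ≤ C₁ ^ 2 * dist l.1 y ^ (-β) := by
    have hne : (l : EuclideanSpace ℝ (Fin d)) - y ≠ 0 :=
      sub_ne_zero.2 fun h ↦ by linarith [hsep l l.2, dist_eq_zero.2 h]
    calc ‖weightedFourier μ φ (l - y)‖ ^ 2 ≤ (C₁ * dist l.1 y ^ (-(β / 2))) ^ 2 := by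
          rw [dist_eq_norm]; exact pow_le_pow_left₀ (norm_nonneg _) (hdecay _ hne) 2
      _ = C₁ ^ 2 * dist l.1 y ^ (-β) := by
          rw [mul_pow, ← Real.rpow_mul_natCast dist_nonneg]; norm_num
  refine (hframe.mul_le_tsum_weightedFourier hφ y).trans <|
    tsum_le_of_sum_le'
      (by positivity [Real.rpow_lt_one_of_one_lt_of_neg one_lt_two (sub_neg.2 haβ)]) fun s ↦ ?_
  calc ∑ l ∈ s, ‖weightedFourier μ φ (l - y)‖ ^ 2
      ≤ ∑ l ∈ s, C₁ ^ 2 * dist l.1 y ^ (-β) := Finset.sum_le_sum fun l _ ↦ hterm l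
    _ ≤ _ := by
      rw [← Finset.mul_sum]
      exact mul_le_mul_of_nonneg_left
        (hΛ.sum_rpow_neg_dist_le hK hβ haβ hR hρ hρR hy hsep s) (sq_nonneg _)

theorem IsFrameWith.exists_forall_le_mul_rpow
    (hframe : IsFrameWith μ (fun l : Λ => fexp (l : EuclideanSpace ℝ (Fin d))) A B)
    (hφ : MemLp φ 2 μ)
    (hdecay : ∀ t, t ≠ 0 → ‖weightedFourier μ φ t‖ ≤ C₁ * ‖t‖ ^ (-(β / 2)))
    (hΛ : CountingBound Λ K a) (hK : 0 ≤ K) (ha : 0 ≤ a) (hβ : 0 < β) (hd : 0 < d)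
    (hcrit : a * (β + d) < β * d) :
    ∃ M, ∀ T : ℝ, 1 ≤ T → A * ∫ x, ‖φ x‖ ^ 2 ∂μ ≤ M * T ^ (a * (β + d) - β * d) := by
  have : Nonempty (Fin d) := ⟨⟨0, hd⟩⟩
  have haβ : a < β := by nlinarith
  have had : a < d := by nlinarith
  set c : ℝ := (2 ^ a * K + 1)⁻¹
  have hc : 0 < c := by positivity
  have hc1 : c ≤ 1 := inv_le_one_of_one_le₀ (by linarith [show 0 ≤ 2 ^ a * K by positivity])
  have hcd : K * 2 ^ a * c ^ d < 1 :=
    calc K * 2 ^ a * c ^ d ≤ 2 ^ a * K * c := by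
          rw [mul_comm K]
          exact mul_le_mul_of_nonneg_left (pow_le_of_le_one hc.le hc1 hd.ne') (by positivity)
      _ < 1 := by rw [← div_eq_mul_inv, div_lt_one (by positivity)]; linarith
  refine ⟨C₁ ^ 2 * (K * 4 ^ a * (1 - 2 ^ (a - β))⁻¹ * c ^ (-β)), fun T hT1 ↦ ?_⟩
  have hT : 0 < T := by linarith
  set R := T ^ (d : ℝ)
  set ρ := c * T ^ ((d : ℝ) - a)
  have hR : 1 ≤ R := Real.one_le_rpow hT1 (Nat.cast_nonneg _)
  have hρ : 0 < ρ := by positivity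
  have hρR : ρ ≤ R := (mul_le_of_le_one_left (by positivity) hc1).trans <|
    Real.rpow_le_rpow_of_exponent_le hT1 (by linarith)
  have hcount_scale : K * (2 * R) ^ a * ρ ^ d = K * 2 ^ a * c ^ d * R ^ d := by
    simp only [R, ρ, Real.mul_rpow zero_le_two (Real.rpow_nonneg hT.le _), mul_pow,
      ← Real.rpow_mul hT.le, ← Real.rpow_mul_natCast hT.le]
    rw [show (d : ℝ) * d = d * a + (d - a) * d by ring, Real.rpow_add hT]
    ring
  have hscale : R ^ a * ρ ^ (-β) = c ^ (-β) * T ^ (a * (β + d) - β * d) := by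
    simp only [R, ρ, Real.mul_rpow hc.le (Real.rpow_nonneg hT.le _), ← Real.rpow_mul hT.le]
    rw [show a * (β + d) - β * d = d * a + (d - a) * -β by ring, Real.rpow_add hT]
    ring
  obtain ⟨y, hy, hsep⟩ := hΛ.exists_forall_le_dist hR hρ.le hρR <| by
    rw [finrank_euclideanSpace_fin, hcount_scale]
    exact mul_lt_of_lt_one_left (by positivity) hcd
  calc A * ∫ x, ‖φ x‖ ^ 2 ∂μ
      ≤ C₁ ^ 2 * (K * 4 ^ a * (1 - 2 ^ (a - β))⁻¹ * (R ^ a * ρ ^ (-β))) :=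
        hframe.le_of_forall_le_dist hφ hdecay hΛ hK hβ.le haβ hR hρ hρR hy hsep
    _ = _ := by rw [hscale]; ring

end Fourier

theorem nonpos_of_forall_le_mul_rpow {X M e : ℝ} (he : e < 0)
    (h : ∀ T : ℝ, 1 ≤ T → X ≤ M * T ^ e) : X ≤ 0 :=
  ge_of_tendsto (by simpa using (tendsto_rpow_neg_atTop (neg_pos.2 he)).const_mul M)
    (eventually_atTop.2 ⟨1, h⟩)

theorem frame_counting_lower_bound_general {d : ℕ} (μ : Measure (EuclideanSpace ℝ (Fin d)))
    (β : ℝ) (hβ0 : 0 < β) (hβd : β ≤ (d : ℝ))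
    (φ : EuclideanSpace ℝ (Fin d) → ℂ) (hφ : MeasureTheory.MemLp φ 2 μ)
    (hφpos : 0 < ∫ x, ‖φ x‖ ^ 2 ∂μ) (C₁ : ℝ)
    (hdecay : ∀ t : EuclideanSpace ℝ (Fin d), t ≠ 0 →
      ‖∫ x, Complex.exp ((((-2) * Real.pi * (inner ℝ t x : ℝ) : ℝ) : ℂ) * Complex.I) * φ x ∂μ‖
        ≤ C₁ * ‖t‖ ^ (-(β / 2)))
    (Λ : Set (EuclideanSpace ℝ (Fin d)))
    (A B : ℝ) (hA : 0 < A)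
    (hframe : IsFrameWith μ (fun l : Λ => fexp (l : EuclideanSpace ℝ (Fin d))) A B)
    (α C : ℝ)
    (hcount : ∀ r : ℝ, 1 ≤ r →
      (Λ ∩ Metric.ball (0 : EuclideanSpace ℝ (Fin d)) r).Finite ∧
      ((Λ ∩ Metric.ball (0 : EuclideanSpace ℝ (Fin d)) r).ncard : ℝ) ≤ C * r ^ α) :
    (1 / β + 1 / (d : ℝ))⁻¹ ≤ α := by
  by_contra! hlt
  have hd : 0 < d := by exact_mod_cast hβ0.trans_le hβd
  have hcrit : max α 0 * (β + d) < β * d := by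
    have hharm : (1 / β + 1 / (d : ℝ))⁻¹ = β * d / (β + d) := by field_simp; ring
    rw [← lt_div_iff₀ (by positivity), ← hharm]
    exact max_lt hlt (by positivity)
  have hΛ : CountingBound Λ (max C 0) (max α 0) :=
    CountingBound.mono hcount (le_max_left _ _) (le_max_right _ _) (le_max_left _ _)
  obtain ⟨M, hM⟩ := hframe.exists_forall_le_mul_rpow hφ hdecay hΛ (le_max_right _ _)
    (le_max_right _ _) hβ0 hd hcrit
  exact (mul_pos hA hφpos).not_ge (nonpos_of_forall_le_mul_rpow (by linarith) hM)

/-- Lemma 2.2: if `ν = φμ` has Fourier decay `|ν̂(t)| ≤ C₁ |t|^{−β/2}`, `E(Λ)` is a frame in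
`L²(μ)`, and `#(Λ ∩ B(0,r)) ≤ C r^α`, then `α ≥ (1/β + 1/d)⁻¹`. -/
theorem frame_counting_lower_bound {d : ℕ} (μ : Measure (EuclideanSpace ℝ (Fin d)))
    [IsFiniteMeasure μ] (β : ℝ) (hβ0 : 0 < β) (hβd : β ≤ (d : ℝ))
    (φ : EuclideanSpace ℝ (Fin d) → ℂ) (hφ : MeasureTheory.MemLp φ 2 μ)
    (hφpos : 0 < ∫ x, ‖φ x‖ ^ 2 ∂μ) (C₁ : ℝ)
    (hdecay : ∀ t : EuclideanSpace ℝ (Fin d), t ≠ 0 →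
      ‖∫ x, Complex.exp ((((-2) * Real.pi * (inner ℝ t x : ℝ) : ℝ) : ℂ) * Complex.I) * φ x ∂μ‖
        ≤ C₁ * ‖t‖ ^ (-(β / 2)))
    (Λ : Set (EuclideanSpace ℝ (Fin d))) (hΛ : Λ.Countable)
    (A B : ℝ) (hA : 0 < A) (hAB : A ≤ B)
    (hframe : IsFrameWith μ (fun l : Λ => fexp (l : EuclideanSpace ℝ (Fin d))) A B)
    (α C : ℝ)
    (hcount : ∀ r : ℝ, 1 ≤ r →
      (Λ ∩ Metric.ball (0 : EuclideanSpace ℝ (Fin d)) r).Finite ∧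
      ((Λ ∩ Metric.ball (0 : EuclideanSpace ℝ (Fin d)) r).ncard : ℝ) ≤ C * r ^ α) :
    (1 / β + 1 / (d : ℝ))⁻¹ ≤ α :=
  frame_counting_lower_bound_general μ β hβ0 hβd φ hφ hφpos C₁ hdecay Λ A B hA hframe α C hcount
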